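/- For fixed real t and m > 0, the function τ ↦ F_{m,τ}(t), where F_{m,τ} is the cumulative distribution function of the non-central t distribution with m degrees of freedom and non-centrality parameter τ, is continuous and strictly decreasing in τ, with limits 1 as τ → -∞ and 0 as τ → +∞. -/

import Mathlib

open MeasureTheory ProbabilityTheory Filter

/-- The non-central t distribution with `m` degrees of freedom and non-centrality
parameter `τ`: the law of `X / √(Y/m)` with `X ~ N(τ,1)` and `Y ~ χ²(m)` independent. -/
noncomputable def noncentralT (m τ : ℝ) : Measure ℝ :=
  ((gaussianReal τ 1).prod (gammaMeasure (m / 2) (1 / 2))).map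
    fun p => p.1 / Real.sqrt (p.2 / m)

/-- The CDF of the non-central t distribution at `t`. -/
noncomputable def noncentralTCdf (m τ t : ℝ) : ℝ :=
  (noncentralT m τ (Set.Iic t)).toReal

/-!
Conditioning on `Y = y`, the event `X / √(Y/m) ≤ t` becomes `Z ≤ t √(y/m) - τ` with
`Z ~ N(0,1)`, so `F_{m,τ}(t) = ∫ Φ(t √(y/m) - τ) dχ²_m(y)`. Every property of `τ ↦ F_{m,τ}(t)`
is inherited from the corresponding property of the standard normal CDF `Φ` by dominated
convergence (`0 ≤ Φ ≤ 1`) and the positivity of integrals.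
-/

open Set Topology
open scoped NNReal

namespace ProbabilityTheory

section Gaussian

variable (μ : ℝ) {v : ℝ≥0}

lemma cdf_gaussianReal_sub_cdf (hv : v ≠ 0) (a b : ℝ) :
    cdf (gaussianReal μ v) b - cdf (gaussianReal μ v) a =
      ∫ x in a..b, gaussianPDFReal μ v x := by
  simp only [cdf_eq_real, measureReal_def, gaussianReal_apply_eq_integral μ hv,
    ENNReal.toReal_ofReal (setIntegral_nonneg measurableSet_Iic
      fun x _ => (gaussianPDFReal_nonneg μ v x))]
  exact intervalIntegral.integral_Iic_sub_Iic (integrable_gaussianPDFReal μ v).integrableOn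
    (integrable_gaussianPDFReal μ v).integrableOn

lemma strictMono_cdf_gaussianReal (hv : v ≠ 0) : StrictMono (cdf (gaussianReal μ v)) := by
  intro a b hab
  have := intervalIntegral.intervalIntegral_pos_of_pos
    (integrable_gaussianPDFReal μ v).intervalIntegrable (gaussianPDFReal_pos μ v · hv) hab
  rw [← cdf_gaussianReal_sub_cdf μ hv] at this
  linarith

lemma continuous_cdf_gaussianReal (hv : v ≠ 0) : Continuous (cdf (gaussianReal μ v)) := by
  have h : cdf (gaussianReal μ v) =
      fun x => cdf (gaussianReal μ v) 0 + ∫ y in (0 : ℝ)..x, gaussianPDFReal μ v y := by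
    funext x
    rw [← cdf_gaussianReal_sub_cdf μ hv]
    ring
  rw [h]
  exact continuous_const.add ((integrable_gaussianPDFReal μ v).continuous_primitive 0)

lemma cdf_gaussianReal_eq_cdf_sub (v : ℝ≥0) (x : ℝ) :
    cdf (gaussianReal μ v) x = cdf (gaussianReal 0 v) (x - μ) := by
  have hshift : (gaussianReal 0 v).map (· + μ) = gaussianReal μ v := by
    simpa using gaussianReal_map_add_const (μ := 0) (v := v) μ
  rw [← hshift, cdf_eq_real, cdf_eq_real, measureReal_def, measureReal_def,
    Measure.map_apply (measurable_add_const μ) measurableSet_Iic,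
    show (· + μ) ⁻¹' Iic x = Iic (x - μ) by ext y; simp [le_sub_iff_add_le]]

end Gaussian

lemma gammaMeasure_ae_pos (a r : ℝ) : ∀ᵐ y ∂gammaMeasure a r, 0 < y := by
  rw [ae_iff]
  have h : {y : ℝ | ¬ 0 < y} = Iic 0 := by ext y; simp
  rw [h, gammaMeasure, withDensity_apply _ measurableSet_Iic,
    setLIntegral_congr (Iio_ae_eq_Iic (a := (0 : ℝ)) (μ := volume)).symm]
  exact lintegral_gammaPDF_of_nonpos le_rfl

lemma map_prod_div_apply_Iic {β : Type*} [MeasurableSpace β] (ν : Measure ℝ) [SFinite ν]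
    {μ : Measure β} [SFinite μ] {s : β → ℝ} (hs : Measurable s) (hpos : ∀ᵐ y ∂μ, 0 < s y)
    (t : ℝ) :
    (ν.prod μ).map (fun p => p.1 / s p.2) (Iic t) = ∫⁻ y, ν (Iic (t * s y)) ∂μ := by
  have hf : Measurable fun p : ℝ × β => p.1 / s p.2 := measurable_fst.div (hs.comp measurable_snd)
  rw [Measure.map_apply hf measurableSet_Iic, Measure.prod_apply_symm (hf measurableSet_Iic)]
  refine lintegral_congr_ae (hpos.mono fun y hy => ?_)
  dsimp only
  rw [show (fun x => (x, y)) ⁻¹' ((fun p : ℝ × β => p.1 / s p.2) ⁻¹' Iic t) = Iic (t * s y) by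
    ext x; simp [div_le_iff₀ hy]]

lemma integral_lt_integral_of_forall_lt {α : Type*} [MeasurableSpace α] {μ : Measure α}
    [NeZero μ] {f g : α → ℝ} (hf : Integrable f μ) (hg : Integrable g μ) (hfg : ∀ x, f x < g x) :
    ∫ x, f x ∂μ < ∫ x, g x ∂μ := by
  have hsupp : Function.support (fun x => g x - f x) = univ :=
    eq_univ_of_forall fun x => (sub_pos.2 (hfg x)).ne'
  rw [← sub_pos, ← integral_sub hg hf, integral_pos_iff_support_of_nonneg
    (fun x => (sub_pos.2 (hfg x)).le) (hg.sub hf), hsupp]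
  exact Measure.measure_univ_pos.2 (NeZero.ne μ)

section LocationMixture

variable {α : Type*} [MeasurableSpace α] {μ : Measure α} {h : α → ℝ} (ν : Measure ℝ)

lemma norm_cdf_le_one (x : ℝ) : ‖cdf ν x‖ ≤ 1 := by
  rw [Real.norm_eq_abs, abs_of_nonneg (cdf_nonneg ν x)]
  exact cdf_le_one ν x

lemma aestronglyMeasurable_cdf_comp_sub (hh : AEMeasurable h μ) (τ : ℝ) :
    AEStronglyMeasurable (fun y => cdf ν (h y - τ)) μ :=
  ((cdf ν).mono.measurable.comp_aemeasurable (hh.sub_const τ)).aestronglyMeasurable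

lemma integrable_cdf_comp_sub [IsFiniteMeasure μ] (hh : AEMeasurable h μ) (τ : ℝ) :
    Integrable (fun y => cdf ν (h y - τ)) μ :=
  (integrable_const (1 : ℝ)).mono' (aestronglyMeasurable_cdf_comp_sub ν hh τ)
    (ae_of_all _ fun _ => norm_cdf_le_one ν _)

lemma continuous_integral_cdf_comp_sub [IsFiniteMeasure μ] (hν : Continuous (cdf ν))
    (hh : AEMeasurable h μ) : Continuous fun τ => ∫ y, cdf ν (h y - τ) ∂μ :=
  continuous_of_dominated (aestronglyMeasurable_cdf_comp_sub ν hh)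
    (fun _ => ae_of_all _ fun _ => norm_cdf_le_one ν _) (integrable_const 1)
    (ae_of_all _ fun _ => hν.comp (continuous_const.sub continuous_id))

lemma strictAnti_integral_cdf_comp_sub [IsFiniteMeasure μ] [NeZero μ]
    (hν : StrictMono (cdf ν)) (hh : AEMeasurable h μ) :
    StrictAnti fun τ => ∫ y, cdf ν (h y - τ) ∂μ := fun a b hab =>
  integral_lt_integral_of_forall_lt (integrable_cdf_comp_sub ν hh b)
    (integrable_cdf_comp_sub ν hh a) fun y => hν (sub_lt_sub_left hab (h y))

lemma tendsto_integral_cdf_comp_sub_atBot [IsProbabilityMeasure μ] (hh : AEMeasurable h μ) :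
    Tendsto (fun τ => ∫ y, cdf ν (h y - τ) ∂μ) atBot (𝓝 1) := by
  have := tendsto_integral_filter_of_dominated_convergence (μ := μ) (fun _ => (1 : ℝ))
    (Eventually.of_forall (aestronglyMeasurable_cdf_comp_sub ν hh))
    (Eventually.of_forall fun _ => ae_of_all _ fun _ => norm_cdf_le_one ν _)
    (integrable_const 1)
    (ae_of_all _ fun y => (tendsto_cdf_atTop ν).comp
      (tendsto_atTop_add_const_left _ (h y) tendsto_neg_atBot_atTop))
  simpa [sub_eq_add_neg] using this

lemma tendsto_integral_cdf_comp_sub_atTop [IsFiniteMeasure μ] (hh : AEMeasurable h μ) :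
    Tendsto (fun τ => ∫ y, cdf ν (h y - τ) ∂μ) atTop (𝓝 0) := by
  have := tendsto_integral_filter_of_dominated_convergence (μ := μ) (fun _ => (1 : ℝ))
    (Eventually.of_forall (aestronglyMeasurable_cdf_comp_sub ν hh))
    (Eventually.of_forall fun _ => ae_of_all _ fun _ => norm_cdf_le_one ν _)
    (integrable_const 1)
    (ae_of_all _ fun y => (tendsto_cdf_atBot ν).comp
      (tendsto_atBot_add_const_left _ (h y) tendsto_neg_atTop_atBot))
  simpa [sub_eq_add_neg] using this

end LocationMixture

end ProbabilityTheory

lemma noncentralTCdf_eq_integral {m : ℝ} (hm : 0 < m) (τ t : ℝ) :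
    noncentralTCdf m τ t =
      ∫ y, cdf (gaussianReal 0 1) (t * √(y / m) - τ) ∂gammaMeasure (m / 2) (1 / 2) := by
  have := isProbabilityMeasure_gammaMeasure (half_pos hm) one_half_pos
  have hpos : ∀ᵐ y ∂gammaMeasure (m / 2) (1 / 2), 0 < √(y / m) :=
    (gammaMeasure_ae_pos _ _).mono fun y hy => Real.sqrt_pos.2 (div_pos hy hm)
  rw [noncentralTCdf, noncentralT, map_prod_div_apply_Iic _ (by fun_prop) hpos]
  simp_rw [← ofReal_cdf, cdf_gaussianReal_eq_cdf_sub τ 1]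
  rw [← ofReal_integral_eq_lintegral_ofReal
      (integrable_cdf_comp_sub _ (by fun_prop) τ) (ae_of_all _ fun _ => cdf_nonneg _ _),
    ENNReal.toReal_ofReal (integral_nonneg fun _ => cdf_nonneg _ _)]

theorem noncentralT_cdf_strictAnti (m t : ℝ) (hm : 0 < m) :
    Continuous (fun τ => noncentralTCdf m τ t) ∧
      StrictAnti (fun τ => noncentralTCdf m τ t) ∧
      Tendsto (fun τ => noncentralTCdf m τ t) atBot (nhds 1) ∧
      Tendsto (fun τ => noncentralTCdf m τ t) atTop (nhds 0) := by
  have := isProbabilityMeasure_gammaMeasure (half_pos hm) one_half_pos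
  have hh : AEMeasurable (fun y => t * √(y / m)) (gammaMeasure (m / 2) (1 / 2)) := by fun_prop
  simp only [noncentralTCdf_eq_integral hm]
  exact ⟨continuous_integral_cdf_comp_sub _ (continuous_cdf_gaussianReal 0 one_ne_zero) hh,
    strictAnti_integral_cdf_comp_sub _ (strictMono_cdf_gaussianReal 0 one_ne_zero) hh,
    tendsto_integral_cdf_comp_sub_atBot _ hh, tendsto_integral_cdf_comp_sub_atTop _ hh⟩
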